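/- Let φ(t) = c·exp(1/(|t|-1)) on [-1,1] with ∫φ = 1, and let 1 < D < C and 0 < ε with Cε < 1. Then φ([1-Cε,1]) ≥ φ(1-Dε)·(C-D)·ε, and consequently ln(φ([1-Cε,1])/φ([1-ε,1])) ≥ ln(C-D) + (D-1)/(D·ε). -/

import Mathlib

open MeasureTheory Real Set

/-- `φ(t) = c · exp(1/(|t|-1))` (with the convention `φ(±1) = 0`). -/
noncomputable def phi (c t : ℝ) : ℝ := if |t| = 1 then 0 else c * Real.exp (1 / (|t| - 1))

/-!
Writing `t = 1 - s`, `φ(1 - s) = c·exp(-1/s)`, so `φ` is decreasing on `[0, 1]`. Bounding the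
integrand by its value at the right end of `[1 - Cε, 1 - Dε]` and at the left end of `[1 - ε, 1]`
gives `φ([1 - Cε, 1]) ≥ φ(1 - Dε)(C - D)ε` and `φ([1 - ε, 1]) ≤ φ(1 - ε)ε`, while
`φ(1 - Dε) = φ(1 - ε)·exp(1/ε - 1/(Dε)) = φ(1 - ε)·exp((D - 1)/(Dε))`.
-/

theorem AntitoneOn.mul_sub_le_intervalIntegral {f : ℝ → ℝ} {a b : ℝ} (hab : a ≤ b)
    (hf : AntitoneOn f (Icc a b)) : f b * (b - a) ≤ ∫ x in a..b, f x := by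
  have hfi : IntervalIntegrable f volume a b := (hf.mono (uIcc_of_le hab).subset).intervalIntegrable
  have := intervalIntegral.integral_mono_on hab intervalIntegrable_const hfi
    fun x hx => hf hx ⟨hab, le_rfl⟩ hx.2
  simpa [mul_comm] using this

theorem AntitoneOn.intervalIntegral_le_mul_sub {f : ℝ → ℝ} {a b : ℝ} (hab : a ≤ b)
    (hf : AntitoneOn f (Icc a b)) : ∫ x in a..b, f x ≤ f a * (b - a) := by
  have hfi : IntervalIntegrable f volume a b := (hf.mono (uIcc_of_le hab).subset).intervalIntegrable
  have := intervalIntegral.integral_mono_on hab hfi intervalIntegrable_const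
    fun x hx => hf ⟨le_rfl, hab⟩ hx hx.1
  simpa [mul_comm] using this

section

variable {c : ℝ}

theorem phi_of_mem_Ico {t : ℝ} (ht0 : 0 ≤ t) (ht1 : t < 1) :
    phi c t = c * exp (-(1 - t)⁻¹) := by
  rw [phi, abs_of_nonneg ht0, if_neg ht1.ne, one_div, ← inv_neg, neg_sub]

theorem phi_one_sub {s : ℝ} (hs0 : 0 < s) (hs1 : s ≤ 1) :
    phi c (1 - s) = c * exp (-s⁻¹) := by
  rw [phi_of_mem_Ico (by linarith) (by linarith), sub_sub_cancel]

theorem phi_one_sub_eq_mul_exp {s t : ℝ} (hs0 : 0 < s) (ht1 : t ≤ 1) (hst : s ≤ t) :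
    phi c (1 - t) = phi c (1 - s) * exp (s⁻¹ - t⁻¹) := by
  rw [phi_one_sub (hs0.trans_le hst) ht1, phi_one_sub hs0 (hst.trans ht1), mul_assoc, ← exp_add]
  ring_nf

theorem phi_nonneg (hc : 0 ≤ c) (t : ℝ) : 0 ≤ phi c t := by
  unfold phi
  split_ifs <;> positivity

theorem phi_pos (hc : 0 < c) {t : ℝ} (ht0 : 0 ≤ t) (ht1 : t < 1) : 0 < phi c t := by
  rw [phi_of_mem_Ico ht0 ht1]
  positivity

theorem antitoneOn_phi (hc : 0 ≤ c) : AntitoneOn (phi c) (Icc 0 1) := by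
  intro s ⟨hs0, _⟩ t ⟨_, ht1⟩ hst
  rcases ht1.eq_or_lt with rfl | ht1
  · simpa [phi] using phi_nonneg hc s
  · rw [phi_of_mem_Ico (hs0.trans hst) ht1, phi_of_mem_Ico hs0 (hst.trans_lt ht1)]
    gcongr

theorem intervalIntegrable_phi (hc : 0 ≤ c) {a b : ℝ} (ha : 0 ≤ a) (hab : a ≤ b)
    (hb : b ≤ 1) : IntervalIntegrable (phi c) volume a b :=
  ((antitoneOn_phi hc).mono (by rw [uIcc_of_le hab]; exact Icc_subset_Icc ha hb)).intervalIntegrable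

theorem mul_sub_le_integral_phi (hc : 0 ≤ c) {a m : ℝ} (ha : 0 ≤ a) (ham : a ≤ m)
    (hm : m ≤ 1) : phi c m * (m - a) ≤ ∫ t in a..1, phi c t :=
  calc phi c m * (m - a) ≤ ∫ t in a..m, phi c t :=
        AntitoneOn.mul_sub_le_intervalIntegral ham
          ((antitoneOn_phi hc).mono (Icc_subset_Icc ha hm))
    _ ≤ ∫ t in a..1, phi c t :=
        intervalIntegral.integral_mono_interval le_rfl ham hm
          (.of_forall (phi_nonneg hc)) (intervalIntegrable_phi hc ha (ham.trans hm) le_rfl)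

theorem integral_phi_le (hc : 0 ≤ c) {a : ℝ} (ha0 : 0 ≤ a) (ha1 : a ≤ 1) :
    ∫ t in a..1, phi c t ≤ phi c a * (1 - a) :=
  AntitoneOn.intervalIntegral_le_mul_sub ha1 ((antitoneOn_phi hc).mono (Icc_subset_Icc ha0 le_rfl))

theorem integral_phi_pos (hc : 0 < c) {a : ℝ} (ha0 : 0 ≤ a) (ha1 : a < 1) :
    0 < ∫ t in a..1, phi c t :=
  intervalIntegral.intervalIntegral_pos_of_pos_on (intervalIntegrable_phi hc.le ha0 ha1.le le_rfl)
    (fun _ ht => phi_pos hc (ha0.trans ht.1.le) ht.2) ha1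

end

theorem stmt14_general (c : ℝ) (hc : 0 < c)
    (C D ε : ℝ) (hD : 1 < D) (hDC : D < C) (hε : 0 < ε) (hCε : C * ε < 1) :
    (∫ t in (1 - C * ε)..1, phi c t) ≥ phi c (1 - D * ε) * (C - D) * ε ∧
    Real.log ((∫ t in (1 - C * ε)..1, phi c t) / (∫ t in (1 - ε)..1, phi c t)) ≥
      Real.log (C - D) + (D - 1) / (D * ε) := by
  have hCD : 0 < C - D := by linarith
  have hεDε : ε < D * ε := by nlinarith
  have hDεCε : D * ε < C * ε := by nlinarith
  have hlower : phi c (1 - D * ε) * (C - D) * ε ≤ ∫ t in (1 - C * ε)..1, phi c t := by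
    convert mul_sub_le_integral_phi hc.le (a := 1 - C * ε) (m := 1 - D * ε)
      (by linarith) (by linarith) (by linarith) using 1
    ring
  refine ⟨hlower, ?_⟩
  have hupper : ∫ t in (1 - ε)..1, phi c t ≤ phi c (1 - ε) * ε := by
    simpa using integral_phi_le hc.le (a := 1 - ε) (by linarith) (by linarith)
  have hpos := integral_phi_pos hc (a := 1 - ε) (by linarith) (by linarith)
  have hexp : ε⁻¹ - (D * ε)⁻¹ = (D - 1) / (D * ε) := by field_simp
  have hratio : (C - D) * exp ((D - 1) / (D * ε)) ≤
      (∫ t in (1 - C * ε)..1, phi c t) / ∫ t in (1 - ε)..1, phi c t := by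
    rw [le_div_iff₀ hpos]
    calc (C - D) * exp ((D - 1) / (D * ε)) * ∫ t in (1 - ε)..1, phi c t
        ≤ (C - D) * exp ((D - 1) / (D * ε)) * (phi c (1 - ε) * ε) := by gcongr
      _ = phi c (1 - D * ε) * (C - D) * ε := by
          rw [phi_one_sub_eq_mul_exp hε (by linarith) hεDε.le, hexp]
          ring
      _ ≤ _ := hlower
  calc Real.log (C - D) + (D - 1) / (D * ε) = Real.log ((C - D) * exp ((D - 1) / (D * ε))) := by
        rw [Real.log_mul hCD.ne' (exp_ne_zero _), log_exp]
    _ ≤ _ := Real.log_le_log (by positivity) hratio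

theorem stmt14 (c : ℝ) (hc : 0 < c)
    (hnorm : ∫ t in (-1:ℝ)..1, phi c t = 1)
    (C D ε : ℝ) (hD : 1 < D) (hDC : D < C) (hε : 0 < ε) (hCε : C * ε < 1) :
    (∫ t in (1 - C * ε)..1, phi c t) ≥ phi c (1 - D * ε) * (C - D) * ε ∧
    Real.log ((∫ t in (1 - C * ε)..1, phi c t) / (∫ t in (1 - ε)..1, phi c t)) ≥
      Real.log (C - D) + (D - 1) / (D * ε) :=
  stmt14_general c hc C D ε hD hDC hε hCε
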